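/- In the H(S, σ) setting, suppose S ⊆ S' are two subgroups of T, each satisfying the invariance and cocycle conditions with respect to the same function σ. Then H(S, σ) ⊆ H(S', σ); the subgroup H(S, σ) is normal in H(S', σ) if and only if S' ⊆ S⁺; and in that case the quotient group H(S', σ)/H(S, σ) is isomorphic to S'/S. -/

import Mathlib

/-- The set `H(S, σ) = { σ(w) s : w ∈ W, s ∈ S }` of a full subgroup datum. -/
def fullSet {G : Type*} [Group G] (T : Subgroup G) (σ : G ⧸ T → G) (S : Set G) : Set G :=
  {g : G | ∃ w : G ⧸ T, ∃ s ∈ S, g = σ w * s}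

/-- The set `S⁺ = { t ∈ T : σ(w)⁻¹ t σ(w) t⁻¹ ∈ S for all w ∈ W }`. -/
def splusSet {G : Type*} [Group G] (T : Subgroup G) (σ : G ⧸ T → G) (S : Subgroup G) :
    Set G :=
  {t : G | t ∈ T ∧ ∀ w : G ⧸ T, (σ w)⁻¹ * t * σ w * t⁻¹ ∈ S}

/-! Since `H(S, σ) ∩ T = S` and `H(S', σ) = H(S, σ) S'`, conjugating `H(S, σ)` inside
`H(S', σ)` amounts to conjugating `σ(w) s` by elements `t ∈ S'`; as `T` is abelian,
`t σ(w) s t⁻¹ = σ(w) (σ(w)⁻¹ t σ(w) t⁻¹) s`, which lies in `H(S, σ)` exactly when the middle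
factor lies in `S`, i.e. when `t ∈ S⁺`. The composite `S' → H(S', σ) → H(S', σ)/H(S, σ)` is
then onto with kernel `S' ∩ H(S, σ) = S`. -/

section FullSubgroup

variable {G : Type*} [Group G] {T : Subgroup G} {σ : G ⧸ T → G}

theorem fullSet_mono {S S' : Set G} (h : S ⊆ S') : fullSet T σ S ⊆ fullSet T σ S' := by
  rintro g ⟨w, s, hs, rfl⟩
  exact ⟨w, s, h hs, rfl⟩

theorem mem_fullSet_iff (hσ : ∀ w : G ⧸ T, (σ w : G ⧸ T) = w) {S : Set G} (hST : S ⊆ T)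
    (g : G) : g ∈ fullSet T σ S ↔ (σ g)⁻¹ * g ∈ S := by
  constructor
  · rintro ⟨w, s, hs, rfl⟩
    rwa [QuotientGroup.mk_mul_of_mem _ (hST hs), hσ, inv_mul_cancel_left]
  · exact fun h => ⟨g, _, h, (mul_inv_cancel_left _ _).symm⟩

variable {S H : Subgroup G}

theorem sigma_mem_of_coe_eq_fullSet (hH : (H : Set G) = fullSet T σ S) (w : G ⧸ T) :
    σ w ∈ H := by
  rw [← SetLike.mem_coe, hH]
  exact ⟨w, 1, S.one_mem, (mul_one _).symm⟩

variable [T.Normal]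

theorem inf_eq_of_coe_eq_fullSet (hσ : ∀ w : G ⧸ T, (σ w : G ⧸ T) = w) (hST : S ≤ T)
    (hH : (H : Set G) = fullSet T σ S) : H ⊓ T = S := by
  have hmem (g : G) : g ∈ H ↔ (σ g)⁻¹ * g ∈ S := by
    rw [← SetLike.mem_coe, hH, mem_fullSet_iff hσ hST, SetLike.mem_coe]
  have hσT : σ 1 ∈ T := by rw [← QuotientGroup.eq_one_iff, hσ]
  -- `σ(1) σ(1) ∈ H` lies over `1`, so it is `σ(1) s` with `s = σ(1)`.
  have hσS : σ 1 ∈ S := by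
    have h := (hmem _).1 (H.mul_mem (sigma_mem_of_coe_eq_fullSet hH 1)
      (sigma_mem_of_coe_eq_fullSet hH 1))
    rwa [QuotientGroup.mk_mul_of_mem _ hσT, hσ, inv_mul_cancel_left] at h
  ext t
  rw [Subgroup.mem_inf, hmem]
  constructor
  · rintro ⟨ht, htT⟩
    rw [(QuotientGroup.eq_one_iff t).2 htT] at ht
    simpa using S.mul_mem hσS ht
  · intro ht
    rw [(QuotientGroup.eq_one_iff t).2 (hST ht)]
    exact ⟨S.mul_mem (S.inv_mem hσS) ht, hST ht⟩

theorem le_of_coe_eq_fullSet (hσ : ∀ w : G ⧸ T, (σ w : G ⧸ T) = w) (hST : S ≤ T)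
    (hH : (H : Set G) = fullSet T σ S) : S ≤ H :=
  inf_eq_of_coe_eq_fullSet hσ hST hH ▸ inf_le_left

theorem conj_mem_of_mem_splusSet (hTab : ∀ a b : G, a ∈ T → b ∈ T → a * b = b * a)
    (hσ : ∀ w : G ⧸ T, (σ w : G ⧸ T) = w) (hST : S ≤ T) (hH : (H : Set G) = fullSet T σ S)
    {t : G} (ht : t ∈ splusSet T σ S) {n : G} (hn : n ∈ H) : t * n * t⁻¹ ∈ H := by
  rw [← SetLike.mem_coe, hH] at hn
  obtain ⟨w, s, hs, rfl⟩ := hn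
  have hts : t * s * t⁻¹ = s := by rw [hTab t s ht.1 (hST hs), mul_inv_cancel_right]
  have hS := le_of_coe_eq_fullSet hσ hST hH
  rw [show t * (σ w * s) * t⁻¹ = σ w * ((σ w)⁻¹ * t * σ w * t⁻¹) * (t * s * t⁻¹) by group, hts]
  exact H.mul_mem (H.mul_mem (sigma_mem_of_coe_eq_fullSet hH w) (hS (ht.2 w))) (hS hs)

variable {S' H' : Subgroup G}

theorem subset_splusSet_of_normal (hσ : ∀ w : G ⧸ T, (σ w : G ⧸ T) = w) (hST : S ≤ T)
    (hS'T : S' ≤ T) (hH : (H : Set G) = fullSet T σ S) (hH' : (H' : Set G) = fullSet T σ S')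
    (hN : (H.subgroupOf H').Normal) : (S' : Set G) ⊆ splusSet T σ S := by
  intro t ht
  refine ⟨hS'T ht, fun w => ?_⟩
  have hσH := sigma_mem_of_coe_eq_fullSet hH w
  have hconj : t * σ w * t⁻¹ ∈ H := hN.conj_mem ⟨σ w, sigma_mem_of_coe_eq_fullSet hH' w⟩ hσH
    ⟨t, le_of_coe_eq_fullSet hσ hS'T hH' ht⟩
  have hT : (σ w)⁻¹ * t * σ w * t⁻¹ ∈ T := by
    refine T.mul_mem ?_ (T.inv_mem (hS'T ht))
    simpa using ‹T.Normal›.conj_mem t (hS'T ht) (σ w)⁻¹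
  rw [← inf_eq_of_coe_eq_fullSet hσ hST hH]
  refine Subgroup.mem_inf.2 ⟨?_, hT⟩
  simpa only [mul_assoc] using H.mul_mem (H.inv_mem hσH) hconj

theorem normal_of_subset_splusSet (hTab : ∀ a b : G, a ∈ T → b ∈ T → a * b = b * a)
    (hσ : ∀ w : G ⧸ T, (σ w : G ⧸ T) = w) (hST : S ≤ T) (hHH' : H ≤ H')
    (hH : (H : Set G) = fullSet T σ S) (hH' : (H' : Set G) = fullSet T σ S')
    (hplus : (S' : Set G) ⊆ splusSet T σ S) : (H.subgroupOf H').Normal := by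
  refine (Subgroup.normal_subgroupOf_iff hHH').2 fun n g hn hg => ?_
  rw [← SetLike.mem_coe, hH'] at hg
  obtain ⟨v, t, ht, rfl⟩ := hg
  have hσH := sigma_mem_of_coe_eq_fullSet hH v
  rw [show σ v * t * n * (σ v * t)⁻¹ = σ v * (t * n * t⁻¹) * (σ v)⁻¹ by group]
  exact H.mul_mem (H.mul_mem hσH (conj_mem_of_mem_splusSet hTab hσ hST hH (hplus ht) hn))
    (H.inv_mem hσH)

noncomputable def quotientMulEquivOfCoeEqFullSet (hσ : ∀ w : G ⧸ T, (σ w : G ⧸ T) = w)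
    (hST : S ≤ T) (hS'T : S' ≤ T) (hH : (H : Set G) = fullSet T σ S)
    (hH' : (H' : Set G) = fullSet T σ S') [(H.subgroupOf H').Normal] [(S.subgroupOf S').Normal] :
    H' ⧸ H.subgroupOf H' ≃* S' ⧸ S.subgroupOf S' :=
  let φ : S' →* H' ⧸ H.subgroupOf H' :=
    (QuotientGroup.mk' _).comp (Subgroup.inclusion (le_of_coe_eq_fullSet hσ hS'T hH'))
  have hker : φ.ker = S.subgroupOf S' := by
    ext t
    rw [MonoidHom.mem_ker, MonoidHom.comp_apply, QuotientGroup.mk'_apply,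
      QuotientGroup.eq_one_iff, Subgroup.mem_subgroupOf, Subgroup.mem_subgroupOf,
      Subgroup.coe_inclusion, ← inf_eq_of_coe_eq_fullSet hσ hST hH, Subgroup.mem_inf,
      and_iff_left (hS'T t.2)]
  have hsurj : Function.Surjective φ := by
    intro q
    obtain ⟨⟨g, hg⟩, rfl⟩ := QuotientGroup.mk_surjective q
    obtain ⟨v, t, ht, rfl⟩ : g ∈ fullSet T σ S' := hH' ▸ hg
    have hσv : ((⟨σ v, sigma_mem_of_coe_eq_fullSet hH' v⟩ : H') : H' ⧸ H.subgroupOf H') = 1 :=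
      (QuotientGroup.eq_one_iff _).2 <|
        Subgroup.mem_subgroupOf.2 (sigma_mem_of_coe_eq_fullSet hH v)
    refine ⟨⟨t, ht⟩, ?_⟩
    rw [show (⟨σ v * t, hg⟩ : H') = ⟨σ v, sigma_mem_of_coe_eq_fullSet hH' v⟩ *
      ⟨t, le_of_coe_eq_fullSet hσ hS'T hH' ht⟩ from rfl, QuotientGroup.mk_mul, hσv, one_mul]
    rfl
  ((QuotientGroup.quotientMulEquivOfEq hker.symm).trans
    (QuotientGroup.quotientKerEquivOfSurjective φ hsurj)).symm

end FullSubgroup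

theorem full_subgroup_normality_and_quotient_general
    {G : Type*} [Group G] (T : Subgroup G) [T.Normal]
    (hTab : ∀ a b : G, a ∈ T → b ∈ T → a * b = b * a)
    (σ : G ⧸ T → G) (hσ : ∀ w : G ⧸ T, (QuotientGroup.mk (σ w) : G ⧸ T) = w)
    (S S' : Subgroup G) (hSS' : S ≤ S') (hST : S ≤ T) (hS'T : S' ≤ T)
    (HS HS' : Subgroup G)
    (hHS : (HS : Set G) = fullSet T σ (S : Set G))
    (hHS' : (HS' : Set G) = fullSet T σ (S' : Set G)) :
    (HS : Set G) ⊆ (HS' : Set G) ∧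
    ((HS.subgroupOf HS').Normal ↔ (S' : Set G) ⊆ splusSet T σ S) ∧
    (∀ [_h1 : (HS.subgroupOf HS').Normal] [_h2 : (S.subgroupOf S').Normal],
      Nonempty ((↥HS' ⧸ HS.subgroupOf HS') ≃* (↥S' ⧸ S.subgroupOf S'))) := by
  have hle : HS ≤ HS' := by
    rw [← SetLike.coe_subset_coe, hHS, hHS']
    exact fullSet_mono hSS'
  refine ⟨hle, ⟨subset_splusSet_of_normal hσ hST hS'T hHS hHS',
    normal_of_subset_splusSet hTab hσ hST hle hHS hHS'⟩, ?_⟩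
  exact ⟨quotientMulEquivOfCoeEqFullSet hσ hST hS'T hHS hHS'⟩

/-- In the `H(S, σ)` setting, let `S ⊆ S'` be two subgroups of the
abelian normal subgroup `T` each satisfying the invariance and cocycle conditions with
respect to the same section `σ`.  Then `H(S, σ) ⊆ H(S', σ)`; the subgroup `H(S, σ)` is
normal in `H(S', σ)` if and only if `S' ⊆ S⁺`; and in that case the quotient group
`H(S', σ)/H(S, σ)` is isomorphic to `S'/S`. -/
theorem full_subgroup_normality_and_quotient
    {G : Type*} [Group G] (T : Subgroup G) [T.Normal]
    (hTab : ∀ a b : G, a ∈ T → b ∈ T → a * b = b * a)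
    (σ : G ⧸ T → G) (hσ : ∀ w : G ⧸ T, (QuotientGroup.mk (σ w) : G ⧸ T) = w)
    (S S' : Subgroup G) (hSS' : S ≤ S') (hST : S ≤ T) (hS'T : S' ≤ T)
    (hSinv : ∀ w : G ⧸ T, ∀ s : G, s ∈ S → (σ w)⁻¹ * s * σ w ∈ S)
    (hSinv' : ∀ w : G ⧸ T, ∀ s : G, s ∈ S → σ w * s * (σ w)⁻¹ ∈ S)
    (hcoc : ∀ v w : G ⧸ T, σ v * σ w * (σ (v * w))⁻¹ ∈ S)
    (hS'inv : ∀ w : G ⧸ T, ∀ s : G, s ∈ S' → (σ w)⁻¹ * s * σ w ∈ S')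
    (hS'inv' : ∀ w : G ⧸ T, ∀ s : G, s ∈ S' → σ w * s * (σ w)⁻¹ ∈ S')
    (hcoc' : ∀ v w : G ⧸ T, σ v * σ w * (σ (v * w))⁻¹ ∈ S')
    (HS HS' : Subgroup G)
    (hHS : (HS : Set G) = fullSet T σ (S : Set G))
    (hHS' : (HS' : Set G) = fullSet T σ (S' : Set G)) :
    (HS : Set G) ⊆ (HS' : Set G) ∧
    ((HS.subgroupOf HS').Normal ↔ (S' : Set G) ⊆ splusSet T σ S) ∧
    (∀ [_h1 : (HS.subgroupOf HS').Normal] [_h2 : (S.subgroupOf S').Normal],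
      Nonempty ((↥HS' ⧸ HS.subgroupOf HS') ≃* (↥S' ⧸ S.subgroupOf S'))) :=
  full_subgroup_normality_and_quotient_general T hTab σ hσ S S' hSS' hST hS'T HS HS' hHS hHS'
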